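/- arXiv:2410.01760 — 2 statements merged into one kernel-verified Lean document; each statement's English description precedes it below -/
import Mathlib

section
/- Fix γ ∈ (0,1) and α ∈ (γ,1). Set δ = α/γ − 1 and β = δ²γ/(2+δ). For T ∈ ℕ and i.i.d. Bernoulli(γ) random variables ξ = (ξ₁,…,ξ_T), define N*(ξ) as the maximal n ∈ {1,…,T} such that S(ξ, n) ≥ α·n, and N*(ξ) = 0 if no such n exists. Then E[N*(ξ)] ≤ e^β/(e^β − 1)². -/
/-!
Bound `N*` by `∑ₙ n · 1[S(ξ, n) ≥ αn]`, so that `E[N*] ≤ ∑ₙ n · P(S(ξ, n) ≥ αn)`. Writing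
`α = (1 + δ)γ`, the multiplicative Chernoff bound gives `P(S(ξ, n) ≥ αn) ≤ e^{-βn}`, and
`∑ₙ n rⁿ ≤ r/(1 - r)²` for `r = e^{-β}` is exactly `e^β/(e^β - 1)²`.
-/

namespace Caching

attribute [local instance low] Classical.propDecidable

/-- A run of a feasible eviction strategy on the request sequence `σ` with cache size `k`
and time horizon `T`.  `C t` is the cache after processing request `t` (with `C 0 = ∅`),
and `p t` is the page evicted at time `t` (meaningful at full-cache misses). -/
structure CacheRun (S : Type) [DecidableEq S] (k T : ℕ) (σ : ℕ → S) where
  C : ℕ → Finset S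
  p : ℕ → S
  init : C 0 = ∅
  card_le : ∀ t, (C t).card ≤ k
  hit : ∀ t, 1 ≤ t → t ≤ T → (σ t ∈ C (t - 1) ∨ (C (t - 1)).card < k) →
      C t = insert (σ t) (C (t - 1))
  evict_mem : ∀ t, 1 ≤ t → t ≤ T → σ t ∉ C (t - 1) → (C (t - 1)).card = k →
      p t ∈ C (t - 1)
  evict : ∀ t, 1 ≤ t → t ≤ T → σ t ∉ C (t - 1) → (C (t - 1)).card = k →
      C t = insert (σ t) ((C (t - 1)).erase (p t))

variable {S : Type} [DecidableEq S]

/- `nextReq σ T t` is `ν(t)`: the first time `s > t` (with `s ≤ T`) at which the page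
`σ t` is requested again, and `T + 1` if there is no such time. -/
open Classical in
noncomputable def nextReq (σ : ℕ → S) (T t : ℕ) : ℕ :=
  if h : ∃ s, t < s ∧ s ≤ T ∧ σ s = σ t then Nat.find h else T + 1

/-- The total prediction loss `η = Σ_{t=1}^T |ν(t) - ω(t)|`. -/
noncomputable def totalLoss (σ : ℕ → S) (T : ℕ) (ω : ℕ → ℕ) : ℕ :=
  ∑ t ∈ Finset.Icc 1 T, Nat.dist (nextReq σ T t) (ω t)

/-- `I_Q(t)`: indices of the last requests (up to time `t`) of the currently cached pages. -/
noncomputable def lastIdx {k T : ℕ} {σ : ℕ → S} (R : CacheRun S k T σ) (t : ℕ) : Finset ℕ :=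
  (Finset.Icc 1 t).filter fun i => σ i ∈ R.C t ∧ ∀ j ∈ Finset.Icc (i + 1) t, σ j ≠ σ i

/-- Time `t` is a full-cache miss (an eviction step). -/
def EvictStep {k T : ℕ} {σ : ℕ → S} (R : CacheRun S k T σ) (t : ℕ) : Prop :=
  1 ≤ t ∧ t ≤ T ∧ σ t ∉ R.C (t - 1) ∧ (R.C (t - 1)).card = k

/-- At time `t` the run evicts the page whose last-request index is `i`. -/
def EvictsIdx {k T : ℕ} {σ : ℕ → S} (R : CacheRun S k T σ) (t i : ℕ) : Prop :=
  EvictStep R t ∧ i ∈ lastIdx R (t - 1) ∧ R.p t = σ i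

/-- `OBJ_Q`: the number of cache misses of the run. -/
noncomputable def misses {k T : ℕ} {σ : ℕ → S} (R : CacheRun S k T σ) : ℕ :=
  ((Finset.Icc 1 T).filter fun t => σ t ∉ R.C (t - 1)).card

/-- Belady's algorithm: on a full-cache miss always evict the cached page with the
largest next-request time. -/
def IsBelady {k T : ℕ} {σ : ℕ → S} (A : CacheRun S k T σ) : Prop :=
  ∀ t, EvictStep A t → ∀ i ∈ lastIdx A (t - 1), A.p t = σ i →
    ∀ j ∈ lastIdx A (t - 1), nextReq σ T j ≤ nextReq σ T i

/-- BlindOracle: on a full-cache miss always evict the cached page with the largest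
predicted next-request time. -/
def IsBlindOracle {k T : ℕ} {σ : ℕ → S} (B : CacheRun S k T σ) (ω : ℕ → ℕ) : Prop :=
  ∀ t, EvictStep B t → ∀ i ∈ lastIdx B (t - 1), B.p t = σ i →
    ∀ j ∈ lastIdx B (t - 1), ω j ≤ ω i

/-- An eviction graph of a run: a directed graph on `{1,…,T}` whose every edge `(i, j)`
corresponds to a distinct time (`time e`) at which the run made a mistake by evicting
page `σ j` while `i` was a strictly better eviction candidate in the cache. -/
structure EvictionGraph {k T : ℕ} {σ : ℕ → S} (R : CacheRun S k T σ) where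
  E : Finset (ℕ × ℕ)
  time : ℕ × ℕ → ℕ
  time_inj : ∀ e ∈ E, ∀ e' ∈ E, time e = time e' → e = e'
  mistake : ∀ e ∈ E, EvictsIdx R (time e) e.2 ∧ e.1 ∈ lastIdx R (time e - 1) ∧
      nextReq σ T e.2 < nextReq σ T e.1

/-- The eviction at time `t` triggers the eviction at time `t'`: the page evicted
at `t` is next requested at `t' = ν(i)`, which is again an eviction step. -/
def Triggers {k T : ℕ} {σ : ℕ → S} (R : CacheRun S k T σ) (t t' : ℕ) : Prop :=
  ∃ i, EvictsIdx R t i ∧ t' = nextReq σ T i ∧ ∃ j, EvictsIdx R t' j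

/-- The eviction of the page with last-request index `i` triggers the eviction of the
page with last-request index `j` (at time `ν(i)`). -/
def TriggersIdx {k T : ℕ} {σ : ℕ → S} (R : CacheRun S k T σ) (i j : ℕ) : Prop :=
  (∃ t, EvictsIdx R t i) ∧ EvictsIdx R (nextReq σ T i) j

/-- The page requested at time `t` was never requested before. -/
def NewPage (σ : ℕ → S) (t : ℕ) : Prop := ∀ s, 1 ≤ s → s < t → σ s ≠ σ t

/-- At time `t` the evicted page has the largest prediction among cached pages. -/
def BlindChoiceAt {k T : ℕ} {σ : ℕ → S} (R : CacheRun S k T σ) (ω : ℕ → ℕ) (t : ℕ) : Prop :=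
  ∀ i ∈ lastIdx R (t - 1), R.p t = σ i → ∀ j ∈ lastIdx R (t - 1), ω j ≤ ω i

/-- Corrector's choice at time `t`: if some cached page has a provably wrong prediction
(`ω i < t`), evict such a page with minimal prediction; otherwise act as BlindOracle. -/
def CorrectorChoiceAt {k T : ℕ} {σ : ℕ → S} (R : CacheRun S k T σ) (ω : ℕ → ℕ) (t : ℕ) :
    Prop :=
  ((∃ i ∈ lastIdx R (t - 1), ω i < t) →
    ∀ i ∈ lastIdx R (t - 1), R.p t = σ i →
      ω i < t ∧ ∀ j ∈ lastIdx R (t - 1), ω j < t → ω i ≤ ω j) ∧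
  ((¬ ∃ i ∈ lastIdx R (t - 1), ω i < t) → BlindChoiceAt R ω t)

/-- The page requested at time `t` was last evicted (before `t`) at a step labeled with
strategy `s₀` (0 = BlindOracle, 1 = RandomAlg, 2 = Corrector). -/
def LastEvictedWith {k T : ℕ} {σ : ℕ → S} (R : CacheRun S k T σ) (strat : ℕ → Fin 3)
    (t : ℕ) (s₀ : Fin 3) : Prop :=
  ∃ t₀, t₀ < t ∧ EvictStep R t₀ ∧ R.p t₀ = σ t ∧ strat t₀ = s₀ ∧
    ∀ t₁, t₀ < t₁ → t₁ < t → ¬(EvictStep R t₁ ∧ R.p t₁ = σ t)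

/-- A run of the AlternatingOracle strategy (for a fixed realization of its random
choices), together with the labeling `strat` of which of the three strategies was used
at each eviction step: on a miss for a never-requested page use BlindOracle; if the
requested page was last evicted by BlindOracle use RandomAlg (an arbitrary cached page);
if by RandomAlg use Corrector; if by Corrector use BlindOracle. -/
def IsAlternatingOracle {k T : ℕ} {σ : ℕ → S} (R : CacheRun S k T σ) (ω : ℕ → ℕ)
    (strat : ℕ → Fin 3) : Prop :=
  ∀ t, EvictStep R t →
    (NewPage σ t → strat t = 0 ∧ BlindChoiceAt R ω t) ∧
    (LastEvictedWith R strat t 0 → strat t = 1) ∧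
    (LastEvictedWith R strat t 1 → strat t = 2 ∧ CorrectorChoiceAt R ω t) ∧
    (LastEvictedWith R strat t 2 → strat t = 0 ∧ BlindChoiceAt R ω t)

/-- AlternatingOracle driven by a seed `u` of uniform random values: at each eviction
step performed by RandomAlg at time `t`, the evicted page is the one whose last-request
index has rank `u t` among the `k` cached indices, so that for a uniformly random seed
the evicted page is uniform over the cache. -/
def IsAlternatingOracleSeeded {k T : ℕ} {σ : ℕ → S} (R : CacheRun S k T σ) (ω : ℕ → ℕ)
    (strat : ℕ → Fin 3) (u : Fin (T + 1) → Fin k) : Prop :=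
  IsAlternatingOracle R ω strat ∧
  ∀ t (h : EvictStep R t), strat t = 1 →
    ∀ i ∈ lastIdx R (t - 1), R.p t = σ i →
      ((lastIdx R (t - 1)).filter fun j => j < i).card =
        ((u ⟨t, Nat.lt_succ_of_le h.2.1⟩ : Fin k) : ℕ)

/-- The family of runs is adapted to the seeds: the behavior up to time `t` depends only
on the seed values with index at most `t` (the strategy is online). -/
def Adapted {k T : ℕ} {σ : ℕ → S} (R : (Fin (T + 1) → Fin k) → CacheRun S k T σ)
    (strat : (Fin (T + 1) → Fin k) → ℕ → Fin 3) : Prop :=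
  ∀ u u' t, (∀ s : Fin (T + 1), (s : ℕ) ≤ t → u s = u' s) →
    (R u).C t = (R u').C t ∧ (R u).p t = (R u').p t ∧ strat u t = strat u' t

/-- The probability of the outcome `x` for `T` i.i.d. Bernoulli(γ) random bits. -/
noncomputable def bernWeight (γ : ℝ) {T : ℕ} (x : Fin T → Bool) : ℝ :=
  ∏ i, if x i then γ else 1 - γ

/-- `S(x, m)`: the number of ones among the first `m` coordinates of `x`. -/
noncomputable def scount {T : ℕ} (x : Fin T → Bool) (m : ℕ) : ℕ :=
  (Finset.univ.filter fun i : Fin T => (i : ℕ) < m ∧ x i).card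

lemma sum_mul_le_sum_mul_sum_filter {ι : Type*} [Fintype ι] (w : ι → ℝ) (hw : ∀ x, 0 ≤ w x)
    (N : ι → ℕ) (s : Finset ℕ) (P : ι → ℕ → Prop) [∀ n, DecidablePred (P · n)]
    (hN : ∀ x, N x = 0 ∨ (N x ∈ s ∧ P x (N x))) :
    ∑ x, w x * N x ≤ ∑ n ∈ s, (n : ℝ) * ∑ x with P x n, w x := by
  have hpoint (x : ι) : (N x : ℝ) ≤ ∑ n ∈ s with P x n, (n : ℝ) := by
    rcases hN x with h0 | ⟨hs, hP⟩
    · rw [h0, Nat.cast_zero]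
      positivity
    · exact Finset.single_le_sum (fun n _ => n.cast_nonneg) (Finset.mem_filter.mpr ⟨hs, hP⟩)
  calc ∑ x, w x * N x ≤ ∑ x, w x * ∑ n ∈ s with P x n, (n : ℝ) := by
        gcongr with x
        exacts [hw x, hpoint x]
    _ = ∑ n ∈ s, (n : ℝ) * ∑ x with P x n, w x := by
        simp_rw [Finset.sum_filter, Finset.mul_sum]
        rw [Finset.sum_comm]
        refine Finset.sum_congr rfl fun n _ => Finset.sum_congr rfl fun x _ => ?_
        split_ifs <;> ring

lemma sum_coe_mul_geometric_le {r : ℝ} (hr0 : 0 ≤ r) (hr1 : r < 1)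
    (s : Finset ℕ) : ∑ n ∈ s, (n : ℝ) * r ^ n ≤ r / (1 - r) ^ 2 :=
  sum_le_hasSum s (fun n _ => by positivity)
    (hasSum_coe_mul_geometric_of_norm_lt_one (by rwa [Real.norm_of_nonneg hr0]))

section Bernoulli

variable {γ : ℝ} {T : ℕ}

lemma bernWeight_nonneg (hγ0 : 0 ≤ γ) (hγ1 : γ ≤ 1) (x : Fin T → Bool) :
    0 ≤ bernWeight γ x :=
  Finset.prod_nonneg fun i _ => by split <;> linarith

lemma sum_bernWeight_mul_prod (f : Fin T → Bool → ℝ) :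
    ∑ x : Fin T → Bool, bernWeight γ x * ∏ i, f i (x i) =
      ∏ i, (γ * f i true + (1 - γ) * f i false) := by
  simp_rw [bernWeight, ← Finset.prod_mul_distrib]
  rw [← Fintype.prod_sum fun i (b : Bool) => (if b then γ else 1 - γ) * f i b]
  simp

lemma exp_mul_scount (t : ℝ) (x : Fin T → Bool) (n : ℕ) :
    Real.exp (t * scount x n) = ∏ i : Fin T, if (i : ℕ) < n ∧ x i then Real.exp t else 1 := by
  rw [scount, Finset.card_filter, Nat.cast_sum, Finset.mul_sum, Real.exp_sum]
  refine Finset.prod_congr rfl fun i _ => ?_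
  split_ifs <;> simp

lemma sum_bernWeight_mul_exp_scount (t : ℝ) {n : ℕ} (hn : n ≤ T) :
    ∑ x : Fin T → Bool, bernWeight γ x * Real.exp (t * scount x n) =
      (γ * Real.exp t + (1 - γ)) ^ n := by
  simp only [exp_mul_scount]
  refine (sum_bernWeight_mul_prod fun i b => if (i : ℕ) < n ∧ b then Real.exp t else 1).trans ?_
  have hfactor (i : Fin T) : γ * (if (i : ℕ) < n ∧ true then Real.exp t else 1) +
      (1 - γ) * (if (i : ℕ) < n ∧ false then Real.exp t else 1) =
      if (i : ℕ) < n then γ * Real.exp t + (1 - γ) else 1 := by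
    split_ifs <;> simp_all
  rw [Finset.prod_congr rfl fun i _ => hfactor i, ← Finset.prod_filter, Finset.prod_const,
    Fin.card_filter_val_lt, min_eq_right hn]

lemma sum_bernWeight_filter_le_exp_mul_pow (hγ0 : 0 ≤ γ) (hγ1 : γ ≤ 1) {t : ℝ} (ht : 0 ≤ t)
    (a : ℝ) {n : ℕ} (hn : n ≤ T) :
    ∑ x : Fin T → Bool with a ≤ (scount x n : ℝ), bernWeight γ x ≤
      Real.exp (-(t * a)) * (γ * Real.exp t + (1 - γ)) ^ n := by
  have hw := bernWeight_nonneg (T := T) hγ0 hγ1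
  calc ∑ x : Fin T → Bool with a ≤ (scount x n : ℝ), bernWeight γ x
      ≤ ∑ x : Fin T → Bool with a ≤ (scount x n : ℝ),
          bernWeight γ x * (Real.exp (-(t * a)) * Real.exp (t * scount x n)) := by
        refine Finset.sum_le_sum fun x hx => le_mul_of_one_le_right (hw x) ?_
        rw [← Real.exp_add, Real.one_le_exp_iff]
        nlinarith [(Finset.mem_filter.mp hx).2]
    _ ≤ ∑ x : Fin T → Bool,
          bernWeight γ x * (Real.exp (-(t * a)) * Real.exp (t * scount x n)) :=
        Finset.sum_le_sum_of_subset_of_nonneg (Finset.filter_subset _ _)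
          fun x _ _ => by have := hw x; positivity
    _ = Real.exp (-(t * a)) * (γ * Real.exp t + (1 - γ)) ^ n := by
        rw [← sum_bernWeight_mul_exp_scount t hn, Finset.mul_sum]
        exact Finset.sum_congr rfl fun x _ => by ring

lemma sum_bernWeight_filter_le_exp_neg_pow (hγ0 : 0 ≤ γ) (hγ1 : γ ≤ 1) {δ : ℝ} (hδ : 0 ≤ δ)
    {n : ℕ} (hn : n ≤ T) :
    ∑ x : Fin T → Bool with (1 + δ) * γ * n ≤ (scount x n : ℝ), bernWeight γ x ≤
      Real.exp (-(δ ^ 2 * γ / (2 + δ))) ^ n := by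
  -- the optimal exponential tilt
  set t := Real.log (1 + δ)
  have hexp : Real.exp t = 1 + δ := Real.exp_log (by linarith)
  have hexponent : γ * δ - t * ((1 + δ) * γ) ≤ -(δ ^ 2 * γ / (2 + δ)) := by
    have hlog : (1 + δ) * γ * (2 * δ / (δ + 2)) ≤ (1 + δ) * γ * t :=
      mul_le_mul_of_nonneg_left (Real.le_log_one_add_of_nonneg hδ) (by positivity)
    have hsplit : (1 + δ) * γ * (2 * δ / (δ + 2)) = γ * δ + δ ^ 2 * γ / (2 + δ) := by
      field_simp
      ring
    linarith
  calc ∑ x : Fin T → Bool with (1 + δ) * γ * n ≤ (scount x n : ℝ), bernWeight γ x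
      ≤ Real.exp (-(t * ((1 + δ) * γ * n))) * (γ * Real.exp t + (1 - γ)) ^ n :=
        sum_bernWeight_filter_le_exp_mul_pow hγ0 hγ1 (Real.log_nonneg (by linarith)) _ hn
    _ ≤ Real.exp (-(t * ((1 + δ) * γ)) * n) * Real.exp (γ * δ) ^ n := by
        rw [hexp, ← mul_assoc, neg_mul]
        gcongr
        linarith [Real.add_one_le_exp (γ * δ)]
    _ = Real.exp (γ * δ - t * ((1 + δ) * γ)) ^ n := by
        rw [← Real.exp_nat_mul, ← Real.exp_nat_mul, ← Real.exp_add]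
        ring_nf
    _ ≤ Real.exp (-(δ ^ 2 * γ / (2 + δ))) ^ n := by gcongr

end Bernoulli

lemma exp_neg_div_one_sub_exp_neg_sq (β : ℝ) (hβ : β ≠ 0) :
    Real.exp (-β) / (1 - Real.exp (-β)) ^ 2 = Real.exp β / (Real.exp β - 1) ^ 2 := by
  have hne : Real.exp β - 1 ≠ 0 := by
    rw [sub_ne_zero, Ne, Real.exp_eq_one_iff]
    exact hβ
  rw [Real.exp_neg]
  field_simp

theorem stmt14_general (γ α δ β : ℝ) (hγ0 : 0 < γ) (hγ1 : γ < 1) (hα0 : γ < α)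
    (hδ : δ = α / γ - 1) (hβ : β = δ ^ 2 * γ / (2 + δ))
    (T : ℕ) (Nstar : (Fin T → Bool) → ℕ)
    (hNstar : ∀ x, IsGreatest {n : ℕ | 1 ≤ n ∧ n ≤ T ∧ α * n ≤ (scount x n : ℝ)}
        (Nstar x) ∨
      (Nstar x = 0 ∧ ∀ n : ℕ, 1 ≤ n → n ≤ T → ¬(α * n ≤ (scount x n : ℝ)))) :
    ∑ x : Fin T → Bool, bernWeight γ x * Nstar x ≤
      Real.exp β / (Real.exp β - 1) ^ 2 := by
  have hδ0 : 0 < δ := by rw [hδ, sub_pos, one_lt_div hγ0]; exact hα0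
  have hβ0 : 0 < β := by rw [hβ]; positivity
  have hα : α = (1 + δ) * γ := by rw [hδ]; field_simp; ring
  have hNstar' (x : Fin T → Bool) :
      Nstar x = 0 ∨ (Nstar x ∈ Finset.Icc 1 T ∧ α * Nstar x ≤ (scount x (Nstar x) : ℝ)) :=
    (hNstar x).elim (fun ⟨⟨h1, hT, hn⟩, _⟩ => Or.inr ⟨Finset.mem_Icc.mpr ⟨h1, hT⟩, hn⟩)
      fun h => Or.inl h.1
  subst hα hβ
  calc ∑ x : Fin T → Bool, bernWeight γ x * Nstar x
      ≤ ∑ n ∈ Finset.Icc 1 T, (n : ℝ) *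
          ∑ x : Fin T → Bool with (1 + δ) * γ * n ≤ (scount x n : ℝ), bernWeight γ x :=
        sum_mul_le_sum_mul_sum_filter _ (bernWeight_nonneg hγ0.le hγ1.le) _ _ _ hNstar'
    _ ≤ ∑ n ∈ Finset.Icc 1 T, (n : ℝ) * Real.exp (-(δ ^ 2 * γ / (2 + δ))) ^ n := by
        gcongr with n hn
        exact sum_bernWeight_filter_le_exp_neg_pow hγ0.le hγ1.le hδ0.le (Finset.mem_Icc.mp hn).2
    _ ≤ _ := sum_coe_mul_geometric_le (Real.exp_nonneg _)
          (Real.exp_lt_one_iff.mpr (neg_lt_zero.mpr hβ0)) _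
    _ = _ := exp_neg_div_one_sub_exp_neg_sq _ hβ0.ne'

/-- For i.i.d. Bernoulli(γ) bits, let `N*(ξ)` be the maximal
`n ∈ {1,…,T}` with `S(ξ, n) ≥ α·n` (and `0` if none exists). Then
`E[N*(ξ)] ≤ e^β/(e^β − 1)²`, where `δ = α/γ − 1` and `β = δ²γ/(2+δ)`. -/
theorem stmt14 (γ α δ β : ℝ) (hγ0 : 0 < γ) (hγ1 : γ < 1) (hα0 : γ < α) (hα1 : α < 1)
    (hδ : δ = α / γ - 1) (hβ : β = δ ^ 2 * γ / (2 + δ))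
    (T : ℕ) (Nstar : (Fin T → Bool) → ℕ)
    (hNstar : ∀ x, IsGreatest {n : ℕ | 1 ≤ n ∧ n ≤ T ∧ α * n ≤ (scount x n : ℝ)}
        (Nstar x) ∨
      (Nstar x = 0 ∧ ∀ n : ℕ, 1 ≤ n → n ≤ T → ¬(α * n ≤ (scount x n : ℝ)))) :
    ∑ x : Fin T → Bool, bernWeight γ x * Nstar x ≤
      Real.exp β / (Real.exp β - 1) ^ 2 :=
  stmt14_general γ α δ β hγ0 hγ1 hα0 hδ hβ T Nstar hNstar

end Caching
end

section
/- Let B be the AlternatingOracle strategy. Then for every realization of its internal random choices, OBJ_B ≤ 3·OPT + 3η, where η = Σ_{t=1}^T |ν(t) − ω(t)| is the total prediction loss. -/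
/-!
Comparing `B` with a run `A` through a potential, as in the proof that Belady's rule is optimal,
gives `OBJ_B ≤ OBJ_A + m`, where `m` counts the *mistakes* of `B`: evictions of a page that is not
the cached page requested furthest in the future. The potential is the largest excess, over all
horizons `r`, of pages in `A`'s cache over pages in `B`'s cache that are requested again by time
`r`; it absorbs every miss of `B` except those paid for by a miss of `A` or by a mistake.

A mistake made by BlindOracle evicts a page `q` while keeping a page `j` with `ν j > ν q` but
`ω j ≤ ω q`, so the return time `ν q` lies between `ν` and `ω` either of `q` or of `j`. Distinct
evictions have distinct return times, hence there are at most `η` such mistakes. Every other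
mistake is an eviction by RandomAlg or Corrector whose page is requested again. By the alternation
rule an eviction by RandomAlg (Corrector) is the return of a page evicted by BlindOracle
(RandomAlg), so among the `E ≤ OBJ_B` evictions whose page returns, those by RandomAlg and
Corrector number at most `2E/3`. Altogether `OBJ_B ≤ OBJ_A + η + 2 OBJ_B / 3`.
-/

namespace Caching

attribute [local instance low] Classical.propDecidable

variable {S : Type} [DecidableEq S]

open Finset

lemma card_filter_insert_erase_add {α : Type*} [DecidableEq α] {U : Finset α} {y w : α}
    (p q : α → Prop) [DecidablePred p] [DecidablePred q] (hy : y ∈ U) (hw : w ∉ U.erase y)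
    (hpq : ∀ a ∈ U.erase y, p a ↔ q a) :
    ((insert w (U.erase y)).filter p).card + (if q y then 1 else 0) =
      (U.filter q).card + (if p w then 1 else 0) := by
  simp only [card_filter]
  rw [sum_insert hw, ← sum_erase_add U _ hy,
    sum_congr rfl fun a ha => by rw [if_congr (hpq a ha) rfl rfl]]
  ring

lemma add_sum_Icc_le_add_sum_Icc {Φ f g : ℕ → ℤ} {n : ℕ}
    (h : ∀ t, 1 ≤ t → t ≤ n → Φ t + f t ≤ Φ (t - 1) + g t) :
    Φ n + ∑ t ∈ Icc 1 n, f t ≤ Φ 0 + ∑ t ∈ Icc 1 n, g t := by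
  induction n with
  | zero => simp
  | succ n ih =>
    rw [sum_Icc_succ_top (by omega), sum_Icc_succ_top (by omega)]
    have := h (n + 1) (by omega) le_rfl
    have := ih fun t h1 h2 => h t h1 (by omega)
    simp only [Nat.add_sub_cancel] at *
    linarith

section NextUse

variable {σ : ℕ → S} {T : ℕ}

noncomputable def nextUse (σ : ℕ → S) (T t : ℕ) (s : S) : ℕ :=
  if h : ∃ r, t < r ∧ r ≤ T ∧ σ r = s then Nat.find h else T + 1

lemma nextUse_le_succ (t : ℕ) (s : S) : nextUse σ T t s ≤ T + 1 := by
  unfold nextUse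
  split_ifs with h
  · exact (Nat.find_spec h).2.1.trans T.le_succ
  · rfl

lemma lt_nextUse {t : ℕ} (s : S) (ht : t ≤ T) : t < nextUse σ T t s := by
  unfold nextUse
  split_ifs with h
  · exact (Nat.find_spec h).1
  · omega

lemma nextUse_le {t r : ℕ} {s : S} (htr : t < r) (hr : r ≤ T) (hs : σ r = s) :
    nextUse σ T t s ≤ r := by
  unfold nextUse
  rw [dif_pos ⟨r, htr, hr, hs⟩]
  exact Nat.find_min' _ ⟨htr, hr, hs⟩

lemma nextUse_spec {t : ℕ} {s : S} (h : nextUse σ T t s ≤ T) :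
    t < nextUse σ T t s ∧ σ (nextUse σ T t s) = s := by
  unfold nextUse at h ⊢
  split_ifs at h ⊢ with hex
  · exact ⟨(Nat.find_spec hex).1, (Nat.find_spec hex).2.2⟩
  · omega

lemma ne_of_lt_nextUse {t r : ℕ} {s : S} (htr : t < r) (hr : r ≤ T) (hrs : r < nextUse σ T t s) :
    σ r ≠ s :=
  fun hs => (nextUse_le htr hr hs).not_gt hrs

lemma nextUse_eq {t r : ℕ} {s : S} (htr : t < r) (hr : r ≤ T) (hs : σ r = s)
    (hmin : ∀ j, t < j → j < r → σ j ≠ s) : nextUse σ T t s = r := by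
  have hle := nextUse_le htr hr hs
  by_contra hne
  obtain ⟨hlt, hs'⟩ := nextUse_spec (σ := σ) (T := T) (t := t) (s := s) (by omega)
  exact hmin _ hlt (by omega) hs'

lemma nextUse_pred_self {t : ℕ} (h1 : 1 ≤ t) (h2 : t ≤ T) : nextUse σ T (t - 1) (σ t) = t :=
  nextUse_eq (by omega) h2 rfl fun j hj1 hj2 => by omega

lemma nextUse_congr {a b : ℕ} {s : S} (hab : a ≤ b) (h : ∀ j, a < j → j ≤ b → σ j ≠ s) :
    nextUse σ T a s = nextUse σ T b s := by
  rcases le_or_gt (nextUse σ T a s) T with ha | ha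
  · obtain ⟨hlt, hs⟩ := nextUse_spec ha
    have hb : b < nextUse σ T a s := by
      by_contra
      exact h _ hlt (by omega) hs
    exact (nextUse_eq hb ha hs fun j hj hjr =>
      ne_of_lt_nextUse (by omega) (by omega) hjr).symm
  · rcases le_or_gt (nextUse σ T b s) T with hb | hb
    · obtain ⟨hlt, hs⟩ := nextUse_spec hb
      have := nextUse_le (σ := σ) (hab.trans_lt hlt) hb hs
      omega
    · have := nextUse_le_succ (σ := σ) (T := T) a s
      have := nextUse_le_succ (σ := σ) (T := T) b s
      omega

lemma nextUse_pred_eq {t : ℕ} {s : S} (hs : s ≠ σ t) : nextUse σ T (t - 1) s = nextUse σ T t s :=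
  nextUse_congr (Nat.sub_le t 1) fun j hj hjt => by
    obtain rfl : j = t := by omega
    exact hs.symm

end NextUse

section Dynamics

variable {k T : ℕ} {σ : ℕ → S} {R : CacheRun S k T σ} {t : ℕ}

namespace EvictStep

lemma p_mem (h : EvictStep R t) : R.p t ∈ R.C (t - 1) :=
  R.evict_mem t h.1 h.2.1 h.2.2.1 h.2.2.2

lemma C_eq (h : EvictStep R t) : R.C t = insert (σ t) ((R.C (t - 1)).erase (R.p t)) :=
  R.evict t h.1 h.2.1 h.2.2.1 h.2.2.2

lemma p_ne (h : EvictStep R t) : R.p t ≠ σ t :=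
  fun he => h.2.2.1 (he ▸ h.p_mem)

lemma p_notMem_C (h : EvictStep R t) : R.p t ∉ R.C t := by
  rw [h.C_eq, mem_insert, mem_erase]
  exact fun hc => hc.elim h.p_ne fun hc => hc.1 rfl

end EvictStep

namespace CacheRun

variable (R)

lemma C_eq_or_evictStep (h1 : 1 ≤ t) (h2 : t ≤ T) :
    R.C t = insert (σ t) (R.C (t - 1)) ∨ EvictStep R t := by
  by_cases h : σ t ∈ R.C (t - 1) ∨ (R.C (t - 1)).card < k
  · exact Or.inl (R.hit t h1 h2 h)
  · push Not at h
    exact Or.inr ⟨h1, h2, h.1, le_antisymm (R.card_le _) h.2⟩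

lemma mem_C_self (h1 : 1 ≤ t) (h2 : t ≤ T) : σ t ∈ R.C t := by
  rcases R.C_eq_or_evictStep h1 h2 with h | h
  · exact h ▸ mem_insert_self _ _
  · exact h.C_eq ▸ mem_insert_self _ _

lemma mem_C_pred {x : S} (h1 : 1 ≤ t) (h2 : t ≤ T) (hx : x ∈ R.C t) (hne : x ≠ σ t) :
    x ∈ R.C (t - 1) := by
  rcases R.C_eq_or_evictStep h1 h2 with h | h
  · exact (mem_insert.mp (h ▸ hx)).resolve_left hne
  · exact mem_of_mem_erase ((mem_insert.mp (h.C_eq ▸ hx)).resolve_left hne)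

lemma card_C_pred_le (h1 : 1 ≤ t) (h2 : t ≤ T) : (R.C (t - 1)).card ≤ (R.C t).card := by
  rcases R.C_eq_or_evictStep h1 h2 with h | h
  · exact h ▸ card_le_card (subset_insert _ _)
  · rw [h.C_eq, card_insert_of_notMem fun hc => h.2.2.1 (mem_of_mem_erase hc),
      card_erase_add_one h.p_mem]

lemma notMem_C_of_forall_ne {a b : ℕ} {x : S} (hab : a ≤ b) (hb : b ≤ T) (ha : x ∉ R.C a)
    (h : ∀ r, a < r → r ≤ b → σ r ≠ x) : x ∉ R.C b := by
  induction b, hab using Nat.le_induction with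
  | base => exact ha
  | succ n hn ih =>
    intro hx
    exact ih (by omega) (fun r hr hrn => h r hr (by omega))
      (R.mem_C_pred (t := n + 1) (by omega) hb hx (h _ (by omega) le_rfl).symm)

lemma exists_request_of_mem {x : S} (ht : t ≤ T) (hx : x ∈ R.C t) :
    ∃ s, 1 ≤ s ∧ s ≤ t ∧ σ s = x := by
  by_contra! h
  exact R.notMem_C_of_forall_ne (Nat.zero_le t) ht (by simp [R.init]) h hx

lemma exists_last_evictStep {a b : ℕ} {x : S} (hab : a ≤ b) (hb : b ≤ T) (ha : x ∈ R.C a)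
    (hxb : x ∉ R.C b) :
    ∃ e, a < e ∧ e ≤ b ∧ EvictStep R e ∧ R.p e = x ∧ ∀ e', e ≤ e' → e' ≤ b → x ∉ R.C e' := by
  induction b, hab using Nat.le_induction with
  | base => exact absurd ha hxb
  | succ n hn ih =>
    by_cases hxn : x ∈ R.C n
    · rcases R.C_eq_or_evictStep (t := n + 1) (by omega) hb with h | h
      · simp only [Nat.add_sub_cancel] at h
        exact absurd (h ▸ mem_insert_of_mem hxn) hxb
      · refine ⟨n + 1, by omega, le_rfl, h, ?_, fun e' h1 h2 => by rwa [le_antisymm h2 h1]⟩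
        by_contra hne
        have hC := h.C_eq
        simp only [Nat.add_sub_cancel] at hC
        rw [hC] at hxb
        exact hxb (mem_insert_of_mem (mem_erase.mpr ⟨Ne.symm hne, hxn⟩))
    · obtain ⟨e, hae, hen, he, hpe, hout⟩ := ih (by omega) hxn
      refine ⟨e, hae, by omega, he, hpe, fun e' h1 h2 => ?_⟩
      rcases Nat.lt_or_ge e' (n + 1) with h | h
      · exact hout e' h1 (by omega)
      · rwa [le_antisymm h2 h]

lemma card_C_eq_of_card_C_pred_eq (h1 : 1 ≤ t) (h2 : t ≤ T) (hk : (R.C (t - 1)).card = k) :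
    (R.C t).card = k :=
  le_antisymm (R.card_le t) (hk.symm.trans_le (R.card_C_pred_le h1 h2))

lemma C_eq_or_full (B A : CacheRun S k T σ) (ht : t ≤ T) :
    B.C t = A.C t ∨ ((B.C t).card = k ∧ (A.C t).card = k) := by
  induction t with
  | zero => exact Or.inl (B.init.trans A.init.symm)
  | succ n ih =>
    have h1 : 1 ≤ n + 1 := by omega
    rcases ih (by omega) with heq | ⟨hB, hA⟩
    · by_cases hfull : (B.C n).card = k
      · exact Or.inr ⟨B.card_C_eq_of_card_C_pred_eq h1 ht hfull,
          A.card_C_eq_of_card_C_pred_eq h1 ht (heq ▸ hfull)⟩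
      · have hlt : (B.C n).card < k := lt_of_le_of_ne (B.card_le n) hfull
        have eB := B.hit (n + 1) h1 ht (Or.inr hlt)
        have eA := A.hit (n + 1) h1 ht (Or.inr (heq ▸ hlt))
        simp only [Nat.add_sub_cancel] at eB eA
        exact Or.inl (by rw [eB, eA, heq])
    · exact Or.inr ⟨B.card_C_eq_of_card_C_pred_eq h1 ht hB, A.card_C_eq_of_card_C_pred_eq h1 ht hA⟩

lemma mem_lastIdx_iff {i : ℕ} :
    i ∈ lastIdx R t ↔ 1 ≤ i ∧ i ≤ t ∧ σ i ∈ R.C t ∧ ∀ j, i < j → j ≤ t → σ j ≠ σ i := by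
  simp only [lastIdx, mem_filter, mem_Icc, Nat.succ_le_iff, and_imp, and_assoc]

lemma exists_mem_lastIdx {x : S} (ht : t ≤ T) (hx : x ∈ R.C t) :
    ∃ i ∈ lastIdx R t, σ i = x := by
  obtain ⟨s, hs1, hst, hsx⟩ := R.exists_request_of_mem ht hx
  have hspec : σ (Nat.findGreatest (σ · = x) t) = x :=
    Nat.findGreatest_spec (P := (σ · = x)) hst hsx
  refine ⟨Nat.findGreatest (σ · = x) t, (R.mem_lastIdx_iff).mpr
    ⟨hs1.trans (Nat.le_findGreatest hst hsx), Nat.findGreatest_le t, ?_, fun j hj hjt => ?_⟩, hspec⟩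
  · rwa [hspec]
  · rw [hspec]
    exact Nat.findGreatest_is_greatest hj hjt

lemma nextReq_eq_of_mem_lastIdx {i : ℕ} (hi : i ∈ lastIdx R t) :
    nextReq σ T i = nextUse σ T t (σ i) := by
  obtain ⟨-, hit, -, hlast⟩ := (R.mem_lastIdx_iff).mp hi
  exact nextUse_congr hit hlast

end CacheRun

end Dynamics

section Return

variable {k T : ℕ} {σ : ℕ → S}

noncomputable def returnTime (R : CacheRun S k T σ) (e : ℕ) : ℕ := nextUse σ T (e - 1) (R.p e)

variable {R : CacheRun S k T σ} {e : ℕ}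

lemma request_returnTime (hT : returnTime R e ≤ T) : σ (returnTime R e) = R.p e :=
  (nextUse_spec hT).2

namespace EvictStep

lemma p_notMem_C_of_lt_returnTime (he : EvictStep R e) {r : ℕ} (her : e ≤ r) (hr : r ≤ T)
    (hrt : r < returnTime R e) : R.p e ∉ R.C r :=
  R.notMem_C_of_forall_ne her hr he.p_notMem_C fun j hej hjr =>
    ne_of_lt_nextUse (T := T) (t := e - 1) (by omega) (by omega)
      (by unfold returnTime at hrt; omega)

lemma lt_returnTime (he : EvictStep R e) : e < returnTime R e := by
  have hle : e - 1 < returnTime R e := lt_nextUse (R.p e) (by have := he.2.1; omega)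
  refine lt_of_le_of_ne (by omega) fun heq => he.p_ne ?_
  rw [← request_returnTime (heq ▸ he.2.1), ← heq]

lemma notMem_C_pred_returnTime (he : EvictStep R e) (hT : returnTime R e ≤ T) :
    σ (returnTime R e) ∉ R.C (returnTime R e - 1) := by
  rw [request_returnTime hT]
  have := he.lt_returnTime
  exact he.p_notMem_C_of_lt_returnTime (by omega) (by omega) (by omega)

end EvictStep

lemma returnTime_injOn :
    Set.InjOn (returnTime R) {e | EvictStep R e ∧ returnTime R e ≤ T} := by
  suffices h : ∀ e e', EvictStep R e → EvictStep R e' → returnTime R e ≤ T →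
      returnTime R e = returnTime R e' → ¬ e < e' by
    intro e ⟨he, hT⟩ e' ⟨he', hT'⟩ heq
    by_contra hne
    rcases Nat.lt_or_gt_of_ne hne with hlt | hlt
    · exact h e e' he he' hT heq hlt
    · exact h e' e he' he hT' heq.symm hlt
  intro e e' he he' hT heq hlt
  have hp : R.p e' = R.p e := by
    rw [← request_returnTime hT, ← request_returnTime (heq ▸ hT), heq]
  have := he'.lt_returnTime
  exact he.p_notMem_C_of_lt_returnTime (r := e' - 1) (by omega) (by have := he'.2.1; omega)
    (by omega) (hp ▸ he'.p_mem)

lemma exists_last_evictStep_returnTime_eq {t : ℕ} (h1 : 1 ≤ t) (h2 : t ≤ T)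
    (hmiss : σ t ∉ R.C (t - 1)) (hnew : ¬ NewPage σ t) :
    ∃ e < t, EvictStep R e ∧ R.p e = σ t ∧ returnTime R e = t ∧
      ∀ e', e < e' → e' < t → ¬ (EvictStep R e' ∧ R.p e' = σ t) := by
  obtain ⟨s, hs1, hst, hs⟩ : ∃ s, 1 ≤ s ∧ s < t ∧ σ s = σ t := by
    simpa [NewPage] using hnew
  obtain ⟨e, hse, het, he, hpe, hout⟩ := R.exists_last_evictStep (a := s) (b := t - 1)
    (by omega) (by omega) (hs ▸ R.mem_C_self hs1 (by omega)) hmiss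
  refine ⟨e, by omega, he, hpe, ?_, fun e' h1' h2' ⟨he', hpe'⟩ => ?_⟩
  · rw [returnTime, hpe]
    exact nextUse_eq (by omega) h2 rfl fun j hj hjt hjs =>
      hout j (by omega) (by omega) (hjs ▸ R.mem_C_self (by omega) (by omega))
  · exact hout (e' - 1) (by omega) (by omega) (hpe' ▸ he'.p_mem)

end Return

section Potential

variable {k T : ℕ} {σ : ℕ → S}

def IsMistake (B : CacheRun S k T σ) (t : ℕ) : Prop :=
  EvictStep B t ∧ ∃ x ∈ B.C (t - 1), returnTime B t < nextUse σ T (t - 1) x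

noncomputable def mistakes (B : CacheRun S k T σ) : ℕ :=
  ((Icc 1 T).filter (IsMistake B)).card

noncomputable def dueCount (R : CacheRun S k T σ) (t r : ℕ) : ℕ :=
  ((R.C t).filter fun s => nextUse σ T t s ≤ r).card

/-- On a hit the requested page is regarded as leaving the cache and re-entering it. -/
noncomputable def leaving (R : CacheRun S k T σ) (t : ℕ) : S :=
  if σ t ∈ R.C (t - 1) then σ t else R.p t

variable {R : CacheRun S k T σ} {t : ℕ}

lemma dueCount_add (h1 : 1 ≤ t) (h2 : t ≤ T) (hR : σ t ∈ R.C (t - 1) ∨ (R.C (t - 1)).card = k)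
    (r : ℕ) :
    dueCount R t r + (if nextUse σ T (t - 1) (leaving R t) ≤ r then 1 else 0) =
      dueCount R (t - 1) r + (if nextUse σ T t (σ t) ≤ r then 1 else 0) := by
  obtain ⟨hy, hw, hC⟩ : leaving R t ∈ R.C (t - 1) ∧ σ t ∉ (R.C (t - 1)).erase (leaving R t) ∧
      R.C t = insert (σ t) ((R.C (t - 1)).erase (leaving R t)) := by
    by_cases hit : σ t ∈ R.C (t - 1)
    · rw [show leaving R t = σ t from if_pos hit, R.hit t h1 h2 (Or.inl hit), insert_erase hit,
        insert_eq_of_mem hit]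
      exact ⟨hit, notMem_erase _ _, rfl⟩
    · have he : EvictStep R t := ⟨h1, h2, hit, hR.resolve_left hit⟩
      rw [show leaving R t = R.p t from if_neg hit]
      exact ⟨he.p_mem, fun hc => hit (mem_of_mem_erase hc), he.C_eq⟩
  unfold dueCount
  rw [hC]
  refine card_filter_insert_erase_add (nextUse σ T t · ≤ r) (nextUse σ T (t - 1) · ≤ r) hy hw
    fun a ha => ?_
  have hne : a ≠ σ t := by rintro rfl; exact hw ha
  rw [nextUse_pred_eq hne]

lemma nextUse_leaving_of_mem (h1 : 1 ≤ t) (h2 : t ≤ T) (hit : σ t ∈ R.C (t - 1)) :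
    nextUse σ T (t - 1) (leaving R t) = t := by
  rw [show leaving R t = σ t from if_pos hit, nextUse_pred_self h1 h2]

lemma nextUse_leaving_of_evictStep (he : EvictStep R t) :
    nextUse σ T (t - 1) (leaving R t) = returnTime R t := by
  rw [show leaving R t = R.p t from if_neg he.2.2.1, returnTime]

lemma lt_nextUse_of_notMem (h1 : 1 ≤ t) (h2 : t ≤ T) (hmiss : σ t ∉ R.C (t - 1)) {x : S}
    (hx : x ∈ R.C (t - 1)) : t < nextUse σ T (t - 1) x := by
  have hlt : t - 1 < nextUse σ T (t - 1) x := lt_nextUse x (by omega)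
  refine lt_of_le_of_ne (by omega) fun heq => hmiss ?_
  have hspec := (nextUse_spec (σ := σ) (T := T) (t := t - 1) (s := x) (by omega)).2
  rwa [show σ t = x by rw [heq, hspec]]

lemma le_nextUse_leaving (h1 : 1 ≤ t) (h2 : t ≤ T)
    (hR : σ t ∈ R.C (t - 1) ∨ (R.C (t - 1)).card = k) :
    t ≤ nextUse σ T (t - 1) (leaving R t) := by
  by_cases hit : σ t ∈ R.C (t - 1)
  · exact (nextUse_leaving_of_mem h1 h2 hit).ge
  · have he : EvictStep R t := ⟨h1, h2, hit, hR.resolve_left hit⟩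
    rw [nextUse_leaving_of_evictStep he]
    exact (lt_nextUse_of_notMem h1 h2 hit he.p_mem).le

lemma nextUse_le_returnTime_of_not_isMistake (he : EvictStep R t) (hm : ¬ IsMistake R t)
    {x : S} (hx : x ∈ R.C (t - 1)) : nextUse σ T (t - 1) x ≤ returnTime R t :=
  not_lt.mp fun hlt => hm ⟨he, x, hx, hlt⟩

variable (B A : CacheRun S k T σ)

noncomputable def dueGap (t r : ℕ) : ℤ := dueCount A t r - dueCount B t r

/-- No truncation at `0` is needed: `dueGap B A t 0 = 0`. -/
noncomputable def potential (t : ℕ) : ℤ :=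
  (range (T + 1)).sup' nonempty_range_add_one (dueGap B A t)

variable {B A}

lemma dueGap_le_potential {r : ℕ} (hr : r ≤ T) : dueGap B A t r ≤ potential B A t :=
  le_sup' _ (mem_range.mpr (Nat.lt_succ_of_le hr))

lemma potential_le_iff {c : ℤ} : potential B A t ≤ c ↔ ∀ r ≤ T, dueGap B A t r ≤ c := by
  simp only [potential, sup'_le_iff, mem_range, Nat.lt_succ_iff]

lemma dueGap_eq_zero_of_le (ht : t ≤ T) {r : ℕ} (hr : r ≤ t) : dueGap B A t r = 0 := by
  have hempty : ∀ R : CacheRun S k T σ, dueCount R t r = 0 := fun R => by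
    simp only [dueCount, card_eq_zero, filter_eq_empty_iff, not_le]
    exact fun x _ => hr.trans_lt (lt_nextUse x ht)
  simp [dueGap, hempty]

lemma potential_nonneg (ht : t ≤ T) : 0 ≤ potential B A t :=
  (dueGap_eq_zero_of_le ht (Nat.zero_le t)).symm.le.trans (dueGap_le_potential (Nat.zero_le T))

lemma potential_nonpos_of_C_eq (h : B.C t = A.C t) : potential B A t ≤ 0 :=
  potential_le_iff.mpr fun r _ => by simp [dueGap, dueCount, h]

lemma dueGap_step (h1 : 1 ≤ t) (h2 : t ≤ T) (hB : σ t ∈ B.C (t - 1) ∨ (B.C (t - 1)).card = k)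
    (hA : σ t ∈ A.C (t - 1) ∨ (A.C (t - 1)).card = k) (r : ℕ) :
    dueGap B A t r = dueGap B A (t - 1) r
      + (if nextUse σ T (t - 1) (leaving B t) ≤ r then 1 else 0)
      - (if nextUse σ T (t - 1) (leaving A t) ≤ r then 1 else 0) := by
  have eB := congrArg (Nat.cast (R := ℤ)) (dueCount_add h1 h2 hB r)
  have eA := congrArg (Nat.cast (R := ℤ)) (dueCount_add h1 h2 hA r)
  push_cast at eB eA
  unfold dueGap
  linarith

lemma potential_le_potential_pred_add (h1 : 1 ≤ t) (h2 : t ≤ T)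
    (hB : σ t ∈ B.C (t - 1) ∨ (B.C (t - 1)).card = k)
    (hA : σ t ∈ A.C (t - 1) ∨ (A.C (t - 1)).card = k) :
    potential B A t ≤ potential B A (t - 1) + (if σ t ∉ A.C (t - 1) then 1 else 0) := by
  refine potential_le_iff.mpr fun r hr => ?_
  rw [dueGap_step h1 h2 hB hA r]
  have hg := dueGap_le_potential (B := B) (A := A) (t := t - 1) hr
  have hnB := le_nextUse_leaving h1 h2 hB
  by_cases hit : σ t ∈ A.C (t - 1)
  · rw [nextUse_leaving_of_mem h1 h2 hit]
    split_ifs <;> omega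
  · split_ifs <;> omega

lemma one_le_potential_pred (h1 : 1 ≤ t) (h2 : t ≤ T) (hmB : σ t ∉ B.C (t - 1))
    (hA : σ t ∈ A.C (t - 1)) :
    1 ≤ potential B A (t - 1) := by
  have hdueA : 1 ≤ dueCount A (t - 1) t :=
    card_pos.mpr ⟨σ t, mem_filter.mpr ⟨hA, (nextUse_pred_self h1 h2).le⟩⟩
  have hdueB : dueCount B (t - 1) t = 0 := by
    simp only [dueCount, card_eq_zero, filter_eq_empty_iff, not_le]
    exact fun x hx => lt_nextUse_of_notMem h1 h2 hmB hx
  have := dueGap_le_potential (B := B) (A := A) (t := t - 1) h2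
  simp only [dueGap, hdueB] at this
  omega

lemma dueGap_add_card_le {s r : ℕ} (hB : (B.C s).card = k)
    (hdue : ∀ x ∈ B.C s, nextUse σ T s x ≤ r) :
    dueGap B A s r + ((A.C s).filter fun y => ¬ nextUse σ T s y ≤ r).card ≤ 0 := by
  have hcardB : dueCount B s r = k := by rw [dueCount, filter_true_of_mem hdue, hB]
  have hcardA := card_filter_add_card_filter_not (s := A.C s) (fun y => nextUse σ T s y ≤ r)
  have := A.card_le s
  unfold dueGap
  rw [hcardB]
  unfold dueCount
  omega

lemma potential_add_one_le_of_not_isMistake (he : EvictStep B t)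
    (hm : ¬ IsMistake B t) (hA : σ t ∈ A.C (t - 1) ∨ (A.C (t - 1)).card = k) :
    potential B A t + 1 ≤ potential B A (t - 1) + (if σ t ∉ A.C (t - 1) then 1 else 0) := by
  obtain ⟨h1, h2, hmB, hfull⟩ := id he
  have hstep := dueGap_step h1 h2 (Or.inr hfull) hA
  simp only [nextUse_leaving_of_evictStep he] at hstep
  have hdue : ∀ r, returnTime B t ≤ r → ∀ x ∈ B.C (t - 1), nextUse σ T (t - 1) x ≤ r :=
    fun r hr x hx => (nextUse_le_returnTime_of_not_isMistake he hm hx).trans hr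
  have hΦ := potential_nonneg (B := B) (A := A) (t := t - 1) (by omega)
  by_cases hit : σ t ∈ A.C (t - 1)
  · -- B pays a miss that A does not: the potential must drop
    have h1Φ := one_le_potential_pred h1 h2 hmB hit (B := B)
    rw [if_neg (not_not.mpr hit), add_zero, ← le_sub_iff_add_le, potential_le_iff]
    intro r hr
    rw [hstep r, nextUse_leaving_of_mem h1 h2 hit]
    have hg := dueGap_le_potential (B := B) (A := A) (t := t - 1) hr
    have hret : t < returnTime B t := lt_nextUse_of_notMem h1 h2 hmB he.p_mem
    rcases lt_or_ge r t with hrt | hrt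
    · rw [dueGap_eq_zero_of_le (by omega) (by omega)]
      split_ifs <;> omega
    · rcases le_or_gt (returnTime B t) r with hrB | hrB
      · have := dueGap_add_card_le (A := A) hfull (hdue r hrB)
        split_ifs <;> omega
      · split_ifs <;> omega
  · have hA' : EvictStep A t := ⟨h1, h2, hit, hA.resolve_left hit⟩
    rw [if_pos hit, add_le_add_iff_right, potential_le_iff]
    intro r hr
    rw [hstep r, nextUse_leaving_of_evictStep hA']
    have hg := dueGap_le_potential (B := B) (A := A) (t := t - 1) hr
    by_cases hrA : returnTime A t ≤ r
    · split_ifs <;> omega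
    by_cases hrB : returnTime B t ≤ r
    · -- A keeps a page that is not due by `r`, while all of B's pages are
      have := dueGap_add_card_le (A := A) hfull (hdue r hrB)
      have : 0 < ((A.C (t - 1)).filter fun y => ¬ nextUse σ T (t - 1) y ≤ r).card :=
        card_pos.mpr ⟨A.p t, mem_filter.mpr ⟨hA'.p_mem, hrA⟩⟩
      rw [if_pos hrB, if_neg hrA]
      omega
    · rw [if_neg hrB, if_neg hrA]
      omega

lemma potential_step (h1 : 1 ≤ t) (h2 : t ≤ T) :
    potential B A t + (if σ t ∉ B.C (t - 1) then 1 else 0) ≤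
      potential B A (t - 1) + ((if σ t ∉ A.C (t - 1) then 1 else 0) +
        (if IsMistake B t then 1 else 0)) := by
  have hΦ := potential_nonneg (B := B) (A := A) (t := t - 1) (by omega)
  by_cases hfree : σ t ∉ B.C (t - 1) ∧ (B.C (t - 1)).card < k
  · -- both runs insert the requested page into the same, non-full cache
    have heq : B.C (t - 1) = A.C (t - 1) :=
      (CacheRun.C_eq_or_full B A (t := t - 1) (by omega)).resolve_right fun h => hfree.2.ne h.1
    have hC : B.C t = A.C t := by
      rw [B.hit t h1 h2 (Or.inr hfree.2), A.hit t h1 h2 (Or.inr (heq ▸ hfree.2)), heq]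
    have := potential_nonpos_of_C_eq hC
    rw [if_pos hfree.1, if_pos (heq ▸ hfree.1)]
    split_ifs <;> omega
  have hB : σ t ∈ B.C (t - 1) ∨ (B.C (t - 1)).card = k := by
    by_contra! h
    exact hfree ⟨h.1, lt_of_le_of_ne (B.card_le _) h.2⟩
  have hA : σ t ∈ A.C (t - 1) ∨ (A.C (t - 1)).card = k := by
    rcases CacheRun.C_eq_or_full B A (t := t - 1) (by omega) with heq | h
    · exact heq ▸ hB
    · exact Or.inr h.2
  have hle := potential_le_potential_pred_add h1 h2 hB hA
  by_cases hit : σ t ∈ B.C (t - 1)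
  · rw [if_neg (not_not.mpr hit), if_neg (show ¬ IsMistake B t from fun hm => hm.1.2.2.1 hit)]
    omega
  have he : EvictStep B t := ⟨h1, h2, hit, hB.resolve_left hit⟩
  by_cases hm : IsMistake B t
  · rw [if_pos hit, if_pos hm]
    omega
  · have := potential_add_one_le_of_not_isMistake he hm hA
    rw [if_pos hit, if_neg hm]
    omega

end Potential

section Optimality

variable {k T : ℕ} {σ : ℕ → S}

lemma misses_le_misses_add_mistakes (B A : CacheRun S k T σ) :
    misses B ≤ misses A + mistakes B := by
  have h := add_sum_Icc_le_add_sum_Icc (Φ := potential B A) (n := T)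
    (f := fun t => if σ t ∉ B.C (t - 1) then 1 else 0)
    (g := fun t => (if σ t ∉ A.C (t - 1) then 1 else 0) + (if IsMistake B t then 1 else 0))
    fun t h1 h2 => potential_step h1 h2
  have hT := potential_nonneg (B := B) (A := A) (le_refl T)
  have h0 := potential_nonpos_of_C_eq (B := B) (A := A) (t := 0) (B.init.trans A.init.symm)
  rw [sum_add_distrib] at h
  zify
  simp only [misses, mistakes, card_filter]
  push_cast
  linarith

end Optimality

section Alternating

variable {k T : ℕ} {σ : ℕ → S} {B : CacheRun S k T σ} {ω : ℕ → ℕ} {strat : ℕ → Fin 3} {t : ℕ}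

noncomputable def returningEvictions (B : CacheRun S k T σ) : Finset ℕ :=
  (Icc 1 T).filter fun e => EvictStep B e ∧ returnTime B e ≤ T

noncomputable def blindMistakes (B : CacheRun S k T σ) (ω : ℕ → ℕ) : Finset ℕ :=
  (Icc 1 T).filter fun e => IsMistake B e ∧ BlindChoiceAt B ω e

lemma IsMistake.returnTime_le (hm : IsMistake B t) : returnTime B t ≤ T := by
  obtain ⟨-, x, -, hx⟩ := hm
  have := nextUse_le_succ (σ := σ) (T := T) (t - 1) x
  omega

lemma card_returningEvictions_le_misses : (returningEvictions B).card ≤ misses B := by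
  refine card_le_card_of_injOn (returnTime B) (fun e he => ?_)
    (returnTime_injOn.mono fun e he => (mem_filter.mp he).2)
  obtain ⟨-, he, hT⟩ := mem_filter.mp he
  have := he.lt_returnTime
  exact mem_filter.mpr ⟨mem_Icc.mpr ⟨by omega, hT⟩, he.notMem_C_pred_returnTime hT⟩

lemma sum_card_filter_returningEvictions_le_misses (strat : ℕ → Fin 3) :
    ((returningEvictions B).filter (strat · = 0)).card +
      ((returningEvictions B).filter (strat · = 1)).card +
      ((returningEvictions B).filter (strat · = 2)).card ≤ misses B := by
  have := card_eq_sum_card_fiberwise (s := returningEvictions B) (t := univ) (f := strat)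
    fun _ _ => mem_univ _
  rw [Fin.sum_univ_three] at this
  exact this ▸ card_returningEvictions_le_misses

lemma exists_lastEvictedWith (he : EvictStep B t) (hnew : ¬ NewPage σ t) :
    ∃ e, EvictStep B e ∧ returnTime B e = t ∧ LastEvictedWith B strat t (strat e) := by
  obtain ⟨e, het, he', hpe, hret, hlast⟩ :=
    exists_last_evictStep_returnTime_eq he.1 he.2.1 he.2.2.1 hnew
  exact ⟨e, he', hret, e, het, he', hpe, rfl, hlast⟩

lemma IsMistake.exists_returnTime_mem_Ico (hm : IsMistake B t) (hbl : BlindChoiceAt B ω t) :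
    ∃ x ∈ Icc 1 T,
      returnTime B t ∈ Ico (min (nextReq σ T x) (ω x)) (max (nextReq σ T x) (ω x)) := by
  obtain ⟨he, y, hy, hlt⟩ := hm
  have ht : t - 1 ≤ T := by have := he.2.1; omega
  obtain ⟨q, hq, hpq⟩ := B.exists_mem_lastIdx ht he.p_mem
  obtain ⟨j, hj, hyj⟩ := B.exists_mem_lastIdx ht hy
  have hνq : nextReq σ T q = returnTime B t := by
    rw [B.nextReq_eq_of_mem_lastIdx hq, hpq, returnTime]
  have hνj : nextReq σ T j = nextUse σ T (t - 1) y := by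
    rw [B.nextReq_eq_of_mem_lastIdx hj, hyj]
  have hω := hbl q hq hpq.symm j hj
  have hIcc : ∀ i ∈ lastIdx B (t - 1), i ∈ Icc 1 T := fun i hi => by
    obtain ⟨h1, h2, -⟩ := B.mem_lastIdx_iff.mp hi
    exact mem_Icc.mpr ⟨h1, by omega⟩
  by_cases hcase : returnTime B t < ω j
  · exact ⟨q, hIcc q hq, mem_Ico.mpr ⟨by omega, by omega⟩⟩
  · exact ⟨j, hIcc j hj, mem_Ico.mpr ⟨by omega, by omega⟩⟩

lemma card_blindMistakes_le_totalLoss : (blindMistakes B ω).card ≤ totalLoss σ T ω := by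
  have hw : ∀ e ∈ blindMistakes B ω, ∃ x ∈ Icc 1 T,
      returnTime B e ∈ Ico (min (nextReq σ T x) (ω x)) (max (nextReq σ T x) (ω x)) :=
    fun e he => (mem_filter.mp he).2.1.exists_returnTime_mem_Ico (mem_filter.mp he).2.2
  choose! x hx hmem using hw
  have hR : ∀ e ∈ blindMistakes B ω, EvictStep B e ∧ returnTime B e ≤ T := fun e he =>
    ⟨(mem_filter.mp he).2.1.1, (mem_filter.mp he).2.1.returnTime_le⟩
  rw [card_eq_sum_card_fiberwise hx, totalLoss]
  refine sum_le_sum fun y _ => ?_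
  calc ((blindMistakes B ω).filter (x · = y)).card
      ≤ (Ico (min (nextReq σ T y) (ω y)) (max (nextReq σ T y) (ω y))).card := by
        refine card_le_card_of_injOn (returnTime B) (fun e he => ?_) fun e he e' he' h => ?_
        · obtain ⟨hbm, rfl⟩ := mem_filter.mp (mem_coe.mp he)
          exact hmem e hbm
        · exact returnTime_injOn (hR e (mem_filter.mp he).1) (hR e' (mem_filter.mp he').1) h
    _ = Nat.dist (nextReq σ T y) (ω y) := by
        rw [Nat.card_Ico, Nat.dist]
        omega

namespace IsAlternatingOracle

lemma strat_eq_add_one (hB : IsAlternatingOracle B ω strat) (he : EvictStep B t) {s : Fin 3}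
    (h : LastEvictedWith B strat t s) :
    strat t = s + 1 := by
  obtain ⟨-, h0, h1, h2⟩ := hB t he
  fin_cases s
  · exact h0 h
  · exact (h1 h).1
  · exact (h2 h).1

lemma blindChoiceAt_of_strat_eq_zero (hB : IsAlternatingOracle B ω strat) (he : EvictStep B t)
    (h0 : strat t = 0) :
    BlindChoiceAt B ω t := by
  by_cases hnew : NewPage σ t
  · exact ((hB t he).1 hnew).2
  obtain ⟨e, -, -, hlast⟩ := exists_lastEvictedWith (strat := strat) he hnew
  have hsucc := hB.strat_eq_add_one he hlast
  have h2 : strat e = 2 := by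
    rw [h0] at hsucc
    revert hsucc
    generalize strat e = v
    revert v
    decide
  exact ((hB t he).2.2.2 (h2 ▸ hlast)).2

lemma card_filter_returningEvictions_le (hB : IsAlternatingOracle B ω strat) {s s' : Fin 3}
    (hs : s' = s + 1) (hs' : s' ≠ 0) :
    ((returningEvictions B).filter (strat · = s')).card ≤
      ((returningEvictions B).filter (strat · = s)).card := by
  refine (card_le_card fun e he => ?_).trans (card_image_le (f := returnTime B))
  obtain ⟨heR, hse⟩ := mem_filter.mp he
  obtain ⟨-, he, -⟩ := mem_filter.mp heR
  have hnew : ¬ NewPage σ e := fun hnew => hs' (hse ▸ ((hB e he).1 hnew).1)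
  obtain ⟨e₀, he₀, hret, hlast⟩ := exists_lastEvictedWith (strat := strat) he hnew
  have hs₀ : strat e₀ = s := add_right_cancel (hB.strat_eq_add_one he hlast ▸ hse ▸ hs)
  refine mem_image.mpr ⟨e₀, ?_, hret⟩
  simp only [returningEvictions, mem_filter, mem_Icc]
  exact ⟨⟨⟨he₀.1, he₀.2.1⟩, he₀, hret.trans_le he.2.1⟩, hs₀⟩

lemma mistakes_le (hB : IsAlternatingOracle B ω strat) :
    mistakes B ≤ (blindMistakes B ω).card +
      ((returningEvictions B).filter (strat · = 1)).card +
      ((returningEvictions B).filter (strat · = 2)).card := by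
  refine (card_le_card fun e he => ?_).trans ((card_union_le _ _).trans
    (Nat.add_le_add_right (card_union_le _ _) _))
  obtain ⟨heI, hm⟩ := mem_filter.mp he
  have hR : e ∈ returningEvictions B := mem_filter.mpr ⟨heI, hm.1, hm.returnTime_le⟩
  obtain h | h | h : strat e = 0 ∨ strat e = 1 ∨ strat e = 2 := by
    generalize strat e = v
    revert v
    decide
  · exact mem_union_left _ (mem_union_left _
      (mem_filter.mpr ⟨heI, hm, hB.blindChoiceAt_of_strat_eq_zero hm.1 h⟩))
  · exact mem_union_left _ (mem_union_right _ (mem_filter.mpr ⟨hR, h⟩))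
  · exact mem_union_right _ (mem_filter.mpr ⟨hR, h⟩)

end IsAlternatingOracle

end Alternating

theorem stmt17_general {S : Type} [DecidableEq S] (k T : ℕ) (σ : ℕ → S) (ω : ℕ → ℕ)
    (B A : CacheRun S k T σ) (strat : ℕ → Fin 3)
    (hB : IsAlternatingOracle B ω strat) :
    misses B ≤ 3 * misses A + 3 * totalLoss σ T ω := by
  have hOPT := misses_le_misses_add_mistakes B A
  have hmistakes := hB.mistakes_le
  have hblind := card_blindMistakes_le_totalLoss (B := B) (ω := ω)
  have hreturns := sum_card_filter_returningEvictions_le_misses (B := B) strat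
  have h10 := hB.card_filter_returningEvictions_le (s := 0) (s' := 1) rfl (by decide)
  have h21 := hB.card_filter_returningEvictions_le (s := 1) (s' := 2) rfl (by decide)
  omega

/-- For every realization of the internal random choices of
AlternatingOracle, `OBJ_B ≤ 3·OPT + 3η`. -/
theorem stmt17 {S : Type} [DecidableEq S] (k T : ℕ) (hk : 1 ≤ k) (σ : ℕ → S) (ω : ℕ → ℕ)
    (B A : CacheRun S k T σ) (strat : ℕ → Fin 3)
    (hB : IsAlternatingOracle B ω strat) (hA : IsBelady A) :
    misses B ≤ 3 * misses A + 3 * totalLoss σ T ω :=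
  stmt17_general k T σ ω B A strat hB

end Caching
end
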